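/- (Lemma on common boundaries) Let T be a truncated proper subtree of the dyadic tree of [0,1]^d with outer leaves Λ_T, and let B(Λ_T) be the set of points belonging to at least two cubes of Λ_T. Then the (d−1)-dimensional surface area satisfies |B(Λ_T)| ≤ 2^{d+1} d (#T)^{1/d}. -/

import Mathlib

/-!
A point common to two distinct outer leaves lies in the cubes of two distinct children
`a :: s`, `a' :: s` of their deepest common ancestor `s ∈ T`; if `a i ≠ a' i`, it lies on the
midplane `x i = const` of the cube of `s`. So `B` is covered by the `d · #T` midfaces of cubes of
`T`, and the midface of a cube of side `2^{-j}` has `(d-1)`-measure `2^{-j(d-1)}`. At depth `j`,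
`T` has at most `min(#T, 2^{dj})` nodes; taking `2^J ≤ #T^{1/d} < 2^{J+1}`, the depths `≤ J`
contribute at most `∑_{j ≤ J} 2^j < 2^{J+1}` and the deeper ones at most
`#T 2^{-(J+1)(d-1)} ≤ #T^{1/d}`.
-/

open MeasureTheory

/-- Corner (minimal vertex) of the dyadic cube addressed by a list of child selectors
(root `[]` is `[0,1]^d`; the child of `l` selected by `b : Fin d → Bool` halves each side). -/
noncomputable def dyCorner (d : ℕ) : List (Fin d → Bool) → (Fin d → ℝ)
  | [] => fun _ => 0
  | b :: l => fun i => dyCorner d l i + (if b i then ((2:ℝ) ^ (l.length + 1))⁻¹ else 0)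

/-- The dyadic cube addressed by `n`; it has sidelength `2^{-n.length}`. -/
noncomputable def dyCube (d : ℕ) (n : List (Fin d → Bool)) : Set (Fin d → ℝ) :=
  Set.univ.pi fun i => Set.Icc (dyCorner d n i) (dyCorner d n i + ((2:ℝ) ^ n.length)⁻¹)

open Set

lemma List.exists_prefix_split {α : Type*} :
    ∀ {p q : List α}, ¬ p <+: q → ¬ q <+: p →
      ∃ (s : List α) (a b : α) (p' q' : List α), a ≠ b ∧ p = s ++ a :: p' ∧ q = s ++ b :: q'
  | [], _, h, _ | _, [], _, h => absurd List.nil_prefix h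
  | x :: p, y :: q, hpq, hqp => by
    by_cases hxy : x = y
    · subst hxy
      obtain ⟨s, a, b, p', q', hab, rfl, rfl⟩ :=
        exists_prefix_split (fun h => hpq (List.cons_prefix_cons.2 ⟨rfl, h⟩))
          (fun h => hqp (List.cons_prefix_cons.2 ⟨rfl, h⟩))
      exact ⟨x :: s, a, b, p', q', hab, rfl, rfl⟩
    · exact ⟨[], x, y, p, q, hxy, rfl, rfl⟩

lemma List.exists_cons_suffix_of_not_suffix {α : Type*} {p q : List α}
    (hpq : ¬ p <:+ q) (hqp : ¬ q <:+ p) :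
    ∃ (s : List α) (a b : α), a ≠ b ∧ a :: s <:+ p ∧ b :: s <:+ q := by
  obtain ⟨s, a, b, p', q', hab, hp, hq⟩ :=
    exists_prefix_split (mt List.reverse_prefix.1 hpq) (mt List.reverse_prefix.1 hqp)
  refine ⟨s.reverse, a, b, hab, ⟨p'.reverse, ?_⟩, ⟨q'.reverse, ?_⟩⟩
  · simpa using congrArg List.reverse hp.symm
  · simpa using congrArg List.reverse hq.symm

-- Addresses list the child selectors deepest first, so the ancestors of a node are its suffixes.
lemma mem_of_isSuffix {α : Type*} {T : Set (List α)} (hT : ∀ b l, b :: l ∈ T → l ∈ T)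
    {s l : List α} (hl : l ∈ T) (hs : s <:+ l) : s ∈ T := by
  induction l with
  | nil => rwa [List.suffix_nil.1 hs]
  | cons b l ih =>
    rcases List.suffix_cons_iff.1 hs with rfl | hs
    exacts [hl, ih (hT b l hl) hs]

lemma exists_common_cons_suffix_of_outer_leaves {α : Type*} {T : Set (List α)}
    (hT : ∀ b l, b :: l ∈ T → l ∈ T) {b c : α} {l k : List α}
    (hn : b :: l ∉ T) (hl : l ∈ T) (hm : c :: k ∉ T) (hk : k ∈ T) (hne : b :: l ≠ c :: k) :
    ∃ s ∈ T, ∃ a a', a ≠ a' ∧ a :: s <:+ b :: l ∧ a' :: s <:+ c :: k := by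
  have not_suffix : ∀ {b c : α} {l k : List α}, b :: l ∉ T → k ∈ T → b :: l ≠ c :: k →
      ¬ b :: l <:+ c :: k := fun hn hk hne h =>
    (List.suffix_cons_iff.1 h).elim hne fun h => hn (mem_of_isSuffix hT hk h)
  obtain ⟨s, a, a', haa', hsn, hsm⟩ :=
    List.exists_cons_suffix_of_not_suffix (not_suffix hn hk hne) (not_suffix hm hl hne.symm)
  have hsl : s <:+ l := by
    rcases List.suffix_cons_iff.1 hsn with h | h
    · exact (List.cons_eq_cons.1 h).2 ▸ List.suffix_refl s
    · exact (List.suffix_cons a s).trans h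
  exact ⟨s, mem_of_isSuffix hT hl hsl, a, a', haa', hsn, hsm⟩

lemma inv_two_pow_succ_add_self (n : ℕ) :
    ((2:ℝ) ^ (n + 1))⁻¹ + ((2:ℝ) ^ (n + 1))⁻¹ = ((2:ℝ) ^ n)⁻¹ := by
  rw [pow_succ]; field_simp; norm_num

lemma dyCube_cons_subset {d : ℕ} (b : Fin d → Bool) (l : List (Fin d → Bool)) :
    dyCube d (b :: l) ⊆ dyCube d l := by
  intro x hx i _
  have hxi := hx i (mem_univ i)
  have half := inv_two_pow_succ_add_self l.length
  have hpos : (0:ℝ) < ((2:ℝ) ^ (l.length + 1))⁻¹ := by positivity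
  simp only [dyCorner, List.length_cons, mem_Icc] at hxi ⊢
  split_ifs at hxi <;> constructor <;> linarith [hxi.1, hxi.2]

lemma dyCube_subset_of_isSuffix {d : ℕ} {s n : List (Fin d → Bool)} (h : s <:+ n) :
    dyCube d n ⊆ dyCube d s := by
  obtain ⟨p, rfl⟩ := h
  induction p with
  | nil => rfl
  | cons b p ih => exact (dyCube_cons_subset b (p ++ s)).trans ih

noncomputable def dyMidface (d : ℕ) (s : List (Fin d → Bool)) (i : Fin d) : Set (Fin d → ℝ) :=
  dyCube d s ∩ {x | x i = dyCorner d s i + ((2:ℝ) ^ (s.length + 1))⁻¹}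

lemma mem_dyMidface_of_mem_dyCube_cons {d : ℕ} {s : List (Fin d → Bool)} {a b : Fin d → Bool}
    {i : Fin d} {x : Fin d → ℝ} (hab : a i ≠ b i)
    (ha : x ∈ dyCube d (a :: s)) (hb : x ∈ dyCube d (b :: s)) : x ∈ dyMidface d s i := by
  refine ⟨dyCube_cons_subset a s ha, ?_⟩
  have hai := ha i (mem_univ i)
  have hbi := hb i (mem_univ i)
  have half := inv_two_pow_succ_add_self s.length
  simp only [dyCorner, List.length_cons, mem_Icc] at hai hbi
  show x i = _
  cases hai' : a i <;> cases hbi' : b i <;>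
    simp only [hai', hbi', ne_eq, not_true_eq_false, Bool.false_eq_true, if_false, if_true,
      add_zero] at hab hai hbi <;>
    linarith [hai.1, hai.2, hbi.1, hbi.2]

lemma lipschitzWith_insertNth {k : ℕ} (i : Fin (k + 1)) (c : ℝ) :
    LipschitzWith 1 (i.insertNth (α := fun _ => ℝ) c) := by
  refine LipschitzWith.of_dist_le_mul fun x y => ?_
  rw [NNReal.coe_one, one_mul, dist_pi_le_iff dist_nonneg]
  refine Fin.succAboveCases i ?_ fun j => ?_
  · simp
  · simpa using dist_le_pi_dist x y j

lemma hausdorffMeasure_Icc_inter_apply_eq_le {k : ℕ} (a b : Fin (k + 1) → ℝ) (i : Fin (k + 1))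
    (c : ℝ) : μH[k] (Icc a b ∩ {x | x i = c}) ≤
      volume (Icc (fun j => a (i.succAbove j)) fun j => b (i.succAbove j)) := by
  have hslice : Icc a b ∩ {x | x i = c} ⊆
      i.insertNth c '' Icc (fun j => a (i.succAbove j)) fun j => b (i.succAbove j) := by
    rintro x ⟨hx, rfl⟩
    rw [← Fin.insertNth_self_removeNth i x] at hx
    exact ⟨i.removeNth x, (Fin.insertNth_mem_Icc.1 hx).2, Fin.insertNth_self_removeNth i x⟩
  calc μH[k] (Icc a b ∩ {x | x i = c})
      ≤ μH[k] (i.insertNth c '' Icc (fun j => a (i.succAbove j)) fun j => b (i.succAbove j)) :=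
        measure_mono hslice
    _ ≤ μH[k] (Icc (fun j => a (i.succAbove j)) fun j => b (i.succAbove j)) := by
        simpa using (lipschitzWith_insertNth i c).hausdorffMeasure_image_le (d := k)
          (Nat.cast_nonneg k) _
    _ = _ := by rw [← hausdorffMeasure_pi_real (ι := Fin k), Fintype.card_fin]

lemma hausdorffMeasure_dyMidface_le {k : ℕ} (s : List (Fin (k + 1) → Bool)) (i : Fin (k + 1)) :
    μH[k] (dyMidface (k + 1) s i) ≤ ENNReal.ofReal (((2:ℝ) ^ s.length)⁻¹ ^ k) := by
  rw [dyMidface, dyCube, pi_univ_Icc]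
  refine (hausdorffMeasure_Icc_inter_apply_eq_le _ _ i _).trans_eq ?_
  rw [Real.volume_Icc_pi, ENNReal.ofReal_pow (by positivity)]
  simp

lemma hausdorffMeasure_biUnion_dyMidface_le {k : ℕ} (T : Finset (List (Fin (k + 1) → Bool))) :
    μH[k] (⋃ s ∈ T, ⋃ i, dyMidface (k + 1) s i) ≤
      ENNReal.ofReal ((k + 1 : ℕ) * ∑ s ∈ T, ((2:ℝ) ^ s.length)⁻¹ ^ k) := by
  calc μH[k] (⋃ s ∈ T, ⋃ i, dyMidface (k + 1) s i)
      ≤ ∑ s ∈ T, ∑ i : Fin (k + 1), μH[k] (dyMidface (k + 1) s i) :=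
        (measure_biUnion_finset_le _ _).trans <|
          Finset.sum_le_sum fun s _ => measure_iUnion_fintype_le _ _
    _ ≤ ∑ s ∈ T, ∑ _i : Fin (k + 1), ENNReal.ofReal (((2:ℝ) ^ s.length)⁻¹ ^ k) := by
        gcongr with s _ i
        exact hausdorffMeasure_dyMidface_le s i
    _ = ENNReal.ofReal ((k + 1 : ℕ) * ∑ s ∈ T, ((2:ℝ) ^ s.length)⁻¹ ^ k) := by
        rw [Finset.mul_sum, ENNReal.ofReal_sum_of_nonneg fun s _ => by positivity]
        refine Finset.sum_congr rfl fun s _ => ?_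
        rw [Finset.sum_const, Finset.card_univ, Fintype.card_fin, nsmul_eq_mul,
          ENNReal.ofReal_mul (by positivity), ENNReal.ofReal_natCast]

lemma exists_mem_dyMidface_of_mem_outer_leaves {d : ℕ} {T : Set (List (Fin d → Bool))}
    (hT : ∀ b l, b :: l ∈ T → l ∈ T) {b c : Fin d → Bool} {l k : List (Fin d → Bool)}
    (hn : b :: l ∉ T) (hl : l ∈ T) (hm : c :: k ∉ T) (hk : k ∈ T) (hne : b :: l ≠ c :: k)
    {x : Fin d → ℝ} (hxn : x ∈ dyCube d (b :: l)) (hxm : x ∈ dyCube d (c :: k)) :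
    ∃ s ∈ T, ∃ i, x ∈ dyMidface d s i := by
  obtain ⟨s, hs, a, a', haa', hsn, hsm⟩ :=
    exists_common_cons_suffix_of_outer_leaves hT hn hl hm hk hne
  obtain ⟨i, hi⟩ := Function.ne_iff.1 haa'
  exact ⟨s, hs, i, mem_dyMidface_of_mem_dyCube_cons hi
    (dyCube_subset_of_isSuffix hsn hxn) (dyCube_subset_of_isSuffix hsm hxm)⟩

section

open Finset

lemma card_filter_length_eq_le {α : Type*} [Fintype α] (S : Finset (List α)) (j : ℕ) :
    #{s ∈ S | s.length = j} ≤ Fintype.card α ^ j := by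
  classical
  calc #{s ∈ S | s.length = j}
      ≤ #(univ.image (List.Vector.toList : List.Vector α j → List α)) :=
        card_le_card fun s hs => mem_image.2 ⟨⟨s, (mem_filter.1 hs).2⟩, mem_univ _, rfl⟩
    _ ≤ Fintype.card (List.Vector α j) := card_image_le
    _ = Fintype.card α ^ j := card_vector j

variable {α : Type*} [Fintype α] {k : ℕ}

lemma sum_filter_length_le_inv_two_pow_le (hα : Fintype.card α ≤ 2 ^ (k + 1))
    (S : Finset (List α)) (J : ℕ) :
    ∑ s ∈ S with s.length ≤ J, ((2:ℝ) ^ s.length)⁻¹ ^ k ≤ 2 ^ (J + 1) := by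
  classical
  set S' := S.filter fun s => s.length ≤ J
  have hdepth : ∀ s ∈ S', s.length ∈ range (J + 1) :=
    fun s hs => mem_range.2 (Nat.lt_succ_of_le (mem_filter.1 hs).2)
  calc ∑ s ∈ S', ((2:ℝ) ^ s.length)⁻¹ ^ k
      = ∑ j ∈ range (J + 1), ∑ s ∈ S' with s.length = j, ((2:ℝ) ^ j)⁻¹ ^ k := by
        rw [← sum_fiberwise_of_maps_to hdepth]
        exact sum_congr rfl fun j _ => sum_congr rfl fun s hs => by rw [(mem_filter.1 hs).2]
    _ ≤ ∑ j ∈ range (J + 1), (2:ℝ) ^ j := by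
        gcongr with j
        rw [sum_const, nsmul_eq_mul]
        calc (#{s ∈ S' | s.length = j} : ℝ) * ((2:ℝ) ^ j)⁻¹ ^ k
            ≤ ((2:ℝ) ^ (k + 1)) ^ j * ((2:ℝ) ^ j)⁻¹ ^ k := by
              gcongr
              exact_mod_cast (card_filter_length_eq_le S' j).trans (Nat.pow_le_pow_left hα j)
          _ = 2 ^ j := by
              rw [inv_pow, ← pow_mul, ← pow_mul, add_mul, one_mul, pow_add, mul_comm k j]
              field_simp
    _ ≤ 2 ^ (J + 1) := by rw [geom_sum_eq (by norm_num)]; norm_num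

lemma sum_inv_two_pow_length_le (hα : Fintype.card α ≤ 2 ^ (k + 1)) (S : Finset (List α)) :
    ∑ s ∈ S, ((2:ℝ) ^ s.length)⁻¹ ^ k ≤ 3 * (#S : ℝ) ^ (1 / (k + 1 : ℝ)) := by
  classical
  rcases S.eq_empty_or_nonempty with rfl | hS
  · simp [Real.zero_rpow_nonneg]
  set x := (#S : ℝ) ^ (1 / (k + 1 : ℝ))
  have hx1 : 1 ≤ x := Real.one_le_rpow (by exact_mod_cast hS.card_pos) (by positivity)
  have hxS : x ^ (k + 1) = #S := by
    rw [← Real.rpow_natCast, ← Real.rpow_mul (by positivity)]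
    push_cast
    rw [one_div_mul_cancel (by positivity), Real.rpow_one]
  obtain ⟨J, hJx, hxJ⟩ := exists_nat_pow_near hx1 one_lt_two
  have hdeep : ∑ s ∈ S with ¬ s.length ≤ J, ((2:ℝ) ^ s.length)⁻¹ ^ k ≤ x := by
    calc ∑ s ∈ S with ¬ s.length ≤ J, ((2:ℝ) ^ s.length)⁻¹ ^ k
        ≤ ∑ _s ∈ S with ¬ _s.length ≤ J, ((2:ℝ) ^ (J + 1))⁻¹ ^ k :=
          sum_le_sum fun s hs => by
            gcongr
            · exact one_le_two
            · have := (mem_filter.1 hs).2; omega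
      _ ≤ ∑ _s ∈ S, ((2:ℝ) ^ (J + 1))⁻¹ ^ k :=
          sum_le_sum_of_subset_of_nonneg (filter_subset _ _) fun _ _ _ => by positivity
      _ = x ^ (k + 1) / (2 ^ (J + 1)) ^ k := by
          rw [sum_const, nsmul_eq_mul, hxS, inv_pow, div_eq_mul_inv]
      _ ≤ x ^ (k + 1) / x ^ k := by gcongr
      _ = x := by field_simp; ring
  have hshallow := sum_filter_length_le_inv_two_pow_le hα S J
  rw [← S.sum_filter_add_sum_filter_not (fun s => s.length ≤ J)]
  have : (2:ℝ) ^ (J + 1) ≤ 2 * x := by rw [pow_succ]; linarith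
  linarith

end

theorem stmt_9_general (d : ℕ) (hd : 1 ≤ d)
    (T : Finset (List (Fin d → Bool)))
    (hparent : ∀ (b : Fin d → Bool) (l : List (Fin d → Bool)), b :: l ∈ T → l ∈ T)
    (Λ : Set (List (Fin d → Bool)))
    (hΛ : Λ = {n | n ∉ T ∧ ∃ b l, n = b :: l ∧ l ∈ T})
    (B : Set (Fin d → ℝ))
    (hB : B = {x | ∃ n ∈ Λ, ∃ m ∈ Λ, n ≠ m ∧ x ∈ dyCube d n ∧ x ∈ dyCube d m}) :
    μH[(d : ℝ) - 1] B ≤ ENNReal.ofReal (2 ^ (d + 1) * d * (T.card : ℝ) ^ (1 / (d : ℝ))) := by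
  obtain ⟨k, rfl⟩ : ∃ k, d = k + 1 := ⟨d - 1, by omega⟩
  have hcover : B ⊆ ⋃ s ∈ T, ⋃ i, dyMidface (k + 1) s i := by
    rw [hB, hΛ]
    rintro x ⟨_, ⟨hn, b, l, rfl, hl⟩, _, ⟨hm, c, k', rfl, hk⟩, hne, hxn, hxm⟩
    obtain ⟨s, hs, i, hx⟩ :=
      exists_mem_dyMidface_of_mem_outer_leaves (T := T) hparent hn hl hm hk hne hxn hxm
    exact mem_biUnion hs (mem_iUnion_of_mem i hx)
  rw [show ((k + 1 : ℕ) : ℝ) - 1 = k by push_cast; ring]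
  refine (measure_mono hcover).trans <| (hausdorffMeasure_biUnion_dyMidface_le T).trans <|
    ENNReal.ofReal_le_ofReal ?_
  have h3 : (3:ℝ) ≤ 2 ^ (k + 1 + 1) :=
    le_trans (by norm_num) (pow_le_pow_right₀ one_le_two (show 2 ≤ k + 1 + 1 by omega))
  calc ((k + 1 : ℕ) : ℝ) * ∑ s ∈ T, ((2:ℝ) ^ s.length)⁻¹ ^ k
      ≤ (k + 1 : ℕ) * (3 * (T.card : ℝ) ^ (1 / (k + 1 : ℝ))) := by
        gcongr
        exact sum_inv_two_pow_length_le (by simp) T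
    _ ≤ (k + 1 : ℕ) * (2 ^ (k + 1 + 1) * (T.card : ℝ) ^ (1 / (k + 1 : ℝ))) := by gcongr
    _ = _ := by push_cast; ring

/-- Common-boundary surface-area bound: for a truncated proper subtree `T` of the dyadic
tree of `[0,1]^d` with outer leaves `Λ`, the set `B` of points belonging to at least two
cubes of `Λ` has `(d-1)`-dimensional Hausdorff measure at most `2^{d+1} d (#T)^{1/d}`. -/
theorem stmt_9 (d : ℕ) (hd : 1 ≤ d)
    (T : Finset (List (Fin d → Bool)))
    (hroot : ([] : List (Fin d → Bool)) ∈ T)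
    (hparent : ∀ (b : Fin d → Bool) (l : List (Fin d → Bool)), b :: l ∈ T → l ∈ T)
    (Λ : Set (List (Fin d → Bool)))
    (hΛ : Λ = {n | n ∉ T ∧ ∃ b l, n = b :: l ∧ l ∈ T})
    (B : Set (Fin d → ℝ))
    (hB : B = {x | ∃ n ∈ Λ, ∃ m ∈ Λ, n ≠ m ∧ x ∈ dyCube d n ∧ x ∈ dyCube d m}) :
    μH[(d : ℝ) - 1] B ≤ ENNReal.ofReal (2 ^ (d + 1) * d * (T.card : ℝ) ^ (1 / (d : ℝ))) :=
  stmt_9_general d hd T hparent Λ hΛ B hB
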